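/- Fix an integer W ≥ 3, real numbers a > 0 and b > 0, and an index i ∈ {1,…,W}. For a probability vector λ on {1,…,W} and each j ∈ {1,…,2W}, j ≠ i, define c_j(λ) as: λ(i)·a + λ(j)·b if j ≤ W and j ≠ i; λ(i)·a + (1−λ(i))·b if j = i+W; and (1 − λ(i) − λ(j−W))·b if j > W and j ≠ i+W. Then the supremum over all probability vectors λ on {1,…,W} of min_{j ≠ i} c_j(λ) equals the supremum over t ∈ [0,1] of min{ t·a + (1−t)·b/(W−1) , (1−t)·(W−2)·b/(W−1) }. In particular, for any fixed value t of λ(i), distributing the remaining mass 1−t uniformly over the W−1 actions j ≠ i is optimal. -/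

import Mathlib

/-- The quantity `c_j(λ)` from Case 2 of the visual search problem (zero-based indexing:
locations are `0,…,W−1`, hypotheses are `0,…,2W−1`). -/
noncomputable def cFun (W : ℕ) (a b : ℝ) (i : ℕ) (l : ℕ → ℝ) (j : ℕ) : ℝ :=
  if j < W then l i * a + l j * b
  else if j = i + W then l i * a + (1 - l i) * b
  else (1 - l i - l (j - W)) * b

/-- `min_{j ∈ {0,…,2W−1}, j ≠ i} c_j(λ)`. -/
noncomputable def minC (W : ℕ) (hW : 3 ≤ W) (a b : ℝ) (i : ℕ) (hi : i < W)
    (l : ℕ → ℝ) : ℝ :=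
  ((Finset.range (2 * W)).erase i).inf'
    (by
      apply Finset.card_pos.mp
      rw [Finset.card_erase_of_mem (Finset.mem_range.mpr (by omega)), Finset.card_range]
      omega)
    (cFun W a b i l)

/-!
Any `c_j` with `j ≠ i` bounds the minimum, so it suffices to pick two good ones. Among the
`W - 1` locations `j ≠ i` some `λ j` is at most the average `(1 - λ i)/(W - 1)` and some is at
least it; the first bounds `c_j` and the second bounds `c_{j+W}` by the two terms of the reduced
objective at `t = λ i`. Spreading `1 - t` evenly attains both terms, while `c_{i+W}` is then
dominated by the first one. Hence every value on the left is below one on the right and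
conversely.
-/

open Finset

lemma Finset.exists_le_sum_div_card {ι : Type*} {s : Finset ι} (hs : s.Nonempty) (f : ι → ℝ) :
    ∃ j ∈ s, f j ≤ (∑ k ∈ s, f k) / #s :=
  exists_le_of_sum_le hs <| by
    rw [sum_const, nsmul_eq_mul, mul_div_cancel₀ _ (by exact_mod_cast hs.card_pos.ne')]

lemma Finset.exists_sum_div_card_le {ι : Type*} {s : Finset ι} (hs : s.Nonempty) (f : ι → ℝ) :
    ∃ j ∈ s, (∑ k ∈ s, f k) / #s ≤ f j :=
  exists_le_of_sum_le hs <| by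
    rw [sum_const, nsmul_eq_mul, mul_div_cancel₀ _ (by exact_mod_cast hs.card_pos.ne')]

noncomputable def spread (W i : ℕ) (t : ℝ) : ℕ → ℝ :=
  fun j => if j = i then t else (1 - t) / ((W : ℝ) - 1)

noncomputable def reducedValue (W : ℕ) (a b t : ℝ) : ℝ :=
  min (t * a + (1 - t) * b / ((W : ℝ) - 1)) ((1 - t) * ((W : ℝ) - 2) * b / ((W : ℝ) - 1))

section

variable {W i : ℕ}

@[simp] lemma spread_self (t : ℝ) : spread W i t i = t := if_pos rfl

lemma spread_of_ne {j : ℕ} (t : ℝ) (hji : j ≠ i) : spread W i t j = (1 - t) / ((W : ℝ) - 1) :=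
  if_neg hji

lemma card_range_erase (hi : i < W) : (#((range W).erase i) : ℝ) = W - 1 := by
  rw [card_erase_of_mem (mem_range.2 hi), card_range, Nat.cast_pred (by omega)]

lemma sum_range_erase_eq_one_sub {l : ℕ → ℝ} (hi : i < W) (hsum : ∑ j ∈ range W, l j = 1) :
    ∑ j ∈ (range W).erase i, l j = 1 - l i := by
  rw [← hsum, ← add_sum_erase _ _ (mem_range.2 hi), add_sub_cancel_left]

lemma exists_le_avg_of_ne {l : ℕ → ℝ} (hW : 2 ≤ W) (hi : i < W)
    (hsum : ∑ j ∈ range W, l j = 1) : ∃ j < W, j ≠ i ∧ l j ≤ (1 - l i) / ((W : ℝ) - 1) := by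
  obtain ⟨j, hj, hle⟩ := exists_le_sum_div_card (s := (range W).erase i)
    (card_pos.1 (by rw [card_erase_of_mem (mem_range.2 hi), card_range]; omega)) l
  rw [sum_range_erase_eq_one_sub hi hsum, card_range_erase hi] at hle
  exact ⟨j, mem_range.1 (mem_of_mem_erase hj), ne_of_mem_erase hj, hle⟩

lemma exists_avg_le_of_ne {l : ℕ → ℝ} (hW : 2 ≤ W) (hi : i < W)
    (hsum : ∑ j ∈ range W, l j = 1) : ∃ j < W, j ≠ i ∧ (1 - l i) / ((W : ℝ) - 1) ≤ l j := by
  obtain ⟨j, hj, hle⟩ := exists_sum_div_card_le (s := (range W).erase i)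
    (card_pos.1 (by rw [card_erase_of_mem (mem_range.2 hi), card_range]; omega)) l
  rw [sum_range_erase_eq_one_sub hi hsum, card_range_erase hi] at hle
  exact ⟨j, mem_range.1 (mem_of_mem_erase hj), ne_of_mem_erase hj, hle⟩

lemma spread_nonneg (hW : 2 ≤ W) {t : ℝ} (ht : t ∈ Set.Icc (0 : ℝ) 1) (j : ℕ) :
    0 ≤ spread W i t j := by
  have : (2 : ℝ) ≤ W := by exact_mod_cast hW
  unfold spread
  split_ifs
  · exact ht.1
  · exact div_nonneg (by linarith [ht.2]) (by linarith)

lemma sum_spread (hW : 2 ≤ W) (hi : i < W) (t : ℝ) : ∑ j ∈ range W, spread W i t j = 1 := by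
  have : (1 : ℝ) < W := by exact_mod_cast hW
  rw [← add_sum_erase _ _ (mem_range.2 hi),
    sum_congr rfl fun j hj => spread_of_ne t (ne_of_mem_erase hj), sum_const, nsmul_eq_mul,
    card_range_erase hi, spread_self, mul_div_cancel₀ _ (by linarith)]
  ring

end

section

variable {W : ℕ} {hW : 3 ≤ W} {a b : ℝ} {i : ℕ} {hi : i < W} {l : ℕ → ℝ}

lemma minC_le_cFun {j : ℕ} (hj : j < 2 * W) (hji : j ≠ i) :
    minC W hW a b i hi l ≤ cFun W a b i l j :=
  inf'_le _ (mem_erase.2 ⟨hji, mem_range.2 hj⟩)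

lemma minC_le_reducedValue (hb : 0 ≤ b) (hsum : ∑ j ∈ range W, l j = 1) :
    minC W hW a b i hi l ≤ reducedValue W a b (l i) := by
  have hW1 : (0 : ℝ) < W - 1 := by
    have : (3 : ℝ) ≤ W := by exact_mod_cast hW
    linarith
  obtain ⟨j, hjW, hji, hlow⟩ := exists_le_avg_of_ne (by omega) hi hsum
  obtain ⟨k, hkW, hki, hhigh⟩ := exists_avg_le_of_ne (by omega) hi hsum
  refine le_min ((minC_le_cFun (j := j) (by omega) hji).trans ?_)
    ((minC_le_cFun (j := k + W) (by omega) (by omega)).trans ?_)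
  · rw [cFun, if_pos hjW, mul_div_right_comm]
    gcongr
  · rw [cFun, if_neg (by omega), if_neg (by omega), Nat.add_sub_cancel]
    calc (1 - l i - l k) * b ≤ (1 - l i - (1 - l i) / ((W : ℝ) - 1)) * b := by gcongr
      _ = (1 - l i) * ((W : ℝ) - 2) * b / ((W : ℝ) - 1) := by field_simp; ring

lemma reducedValue_le_minC_spread (hb : 0 ≤ b) {t : ℝ} (ht : t ≤ 1) :
    reducedValue W a b t ≤ minC W hW a b i hi (spread W i t) := by
  have hW1 : (1 : ℝ) ≤ W - 1 := by
    have : (3 : ℝ) ≤ W := by exact_mod_cast hW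
    linarith
  refine le_inf' _ _ fun j hj => ?_
  obtain ⟨hji, hj2W⟩ := mem_erase.1 hj
  have hj2W := mem_range.1 hj2W
  unfold cFun
  split_ifs with hjW hjiW
  · rw [spread_self, spread_of_ne t hji]
    exact (min_le_left _ _).trans_eq (by ring)
  · -- `c_{i+W}` exceeds the first term since `W - 1 ≥ 1`
    rw [spread_self]
    refine (min_le_left _ _).trans ?_
    gcongr
    exact div_le_self (mul_nonneg (by linarith) hb) hW1
  · rw [spread_self, spread_of_ne t (by omega)]
    exact (min_le_right _ _).trans_eq (by field_simp; ring)

lemma minC_spread (hb : 0 ≤ b) {t : ℝ} (ht : t ≤ 1) :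
    minC W hW a b i hi (spread W i t) = reducedValue W a b t := by
  refine le_antisymm ?_ (reducedValue_le_minC_spread hb ht)
  simpa only [spread_self] using
    minC_le_reducedValue (hW := hW) (hi := hi) (a := a) hb (sum_spread (by omega) hi t)

end

theorem stmt_3_general (W : ℕ) (hW : 3 ≤ W) (a b : ℝ) (hb : 0 < b)
    (i : ℕ) (hi : i < W) :
    sSup {x : ℝ | ∃ l : ℕ → ℝ, (∀ j, j < W → 0 ≤ l j) ∧
        (∑ j ∈ Finset.range W, l j) = 1 ∧ minC W hW a b i hi l = x} =
      sSup {x : ℝ | ∃ t ∈ Set.Icc (0 : ℝ) 1,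
        min (t * a + (1 - t) * b / ((W : ℝ) - 1))
            ((1 - t) * ((W : ℝ) - 2) * b / ((W : ℝ) - 1)) = x} ∧
    ∀ t ∈ Set.Icc (0 : ℝ) 1, ∀ l : ℕ → ℝ, (∀ j, j < W → 0 ≤ l j) →
      (∑ j ∈ Finset.range W, l j) = 1 → l i = t →
      minC W hW a b i hi l ≤
        minC W hW a b i hi (fun j => if j = i then t else (1 - t) / ((W : ℝ) - 1)) := by
  refine ⟨csSup_eq_csSup_of_forall_exists_le ?_ ?_, ?_⟩
  · rintro _ ⟨l, hl, hsum, rfl⟩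
    have hli : l i ≤ 1 :=
      hsum ▸ single_le_sum (fun j hj => hl j (mem_range.1 hj)) (mem_range.2 hi)
    exact ⟨_, ⟨l i, ⟨hl i hi, hli⟩, rfl⟩, minC_le_reducedValue hb.le hsum⟩
  · rintro _ ⟨t, ht, rfl⟩
    exact ⟨_, ⟨spread W i t, fun j _ => spread_nonneg (by omega) ht j, sum_spread (by omega) hi t,
      rfl⟩, (minC_spread hb.le ht.2).ge⟩
  · rintro t ht l - hsum rfl
    exact (minC_le_reducedValue hb.le hsum).trans_eq (minC_spread hb.le ht.2).symm

theorem stmt_3 (W : ℕ) (hW : 3 ≤ W) (a b : ℝ) (ha : 0 < a) (hb : 0 < b)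
    (i : ℕ) (hi : i < W) :
    sSup {x : ℝ | ∃ l : ℕ → ℝ, (∀ j, j < W → 0 ≤ l j) ∧
        (∑ j ∈ Finset.range W, l j) = 1 ∧ minC W hW a b i hi l = x} =
      sSup {x : ℝ | ∃ t ∈ Set.Icc (0 : ℝ) 1,
        min (t * a + (1 - t) * b / ((W : ℝ) - 1))
            ((1 - t) * ((W : ℝ) - 2) * b / ((W : ℝ) - 1)) = x} ∧
    ∀ t ∈ Set.Icc (0 : ℝ) 1, ∀ l : ℕ → ℝ, (∀ j, j < W → 0 ≤ l j) →
      (∑ j ∈ Finset.range W, l j) = 1 → l i = t →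
      minC W hW a b i hi l ≤
        minC W hW a b i hi (fun j => if j = i then t else (1 - t) / ((W : ℝ) - 1)) :=
  stmt_3_general W hW a b hb i hi
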